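/- arXiv:1901.05843 — 2 statements merged into one kernel-verified Lean document; each statement's English description precedes it below -/
import Mathlib

section
/- Let (a_n) be a sequence of positive real numbers and K ≥ 1 an integer, and suppose there is a sequence (s_n) of real numbers such that for all sufficiently large n, a_n/a_{n+1} = 1 + 1/n + (1/n)·∑_{i=1}^{K-1} 1/(∏_{k=1}^{i} ln_{(k)} n) + s_n/(n·∏_{k=1}^{K} ln_{(k)} n), and suppose (s_n) is bounded. Then with ζ_n = n·∏_{k=1}^{K} ln_{(k)} n, the Kummer quantity ρ_n = ζ_n·(a_n/a_{n+1}) − ζ_{n+1} satisfies ρ_n = s_n − 1 + o(1), i.e. ρ_n − s_n + 1 → 0 as n → ∞. -/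
/-!
Write `P(x) = ∏_{k=1}^K ln_(k) x` and `ζ(x) = x P(x)`. Then `ζ'(x) = ∑_{k=0}^K P(x) / P_k(x)`
with `P_k = ∏_{j ≤ k} ln_(j)`, and the hypothesis on `a_n / a_{n+1}` says exactly
`ζ_n a_n / a_{n+1} = ζ_n + ζ'(n) - 1 + s_n`, so `ρ_n - s_n + 1 = ζ'(n) - (ζ(n+1) - ζ(n))`.
Each summand `P / P_k` of `ζ'` is a product of iterated logarithms, so `ζ'` is eventually
increasing and the mean value theorem puts `ζ(n+1) - ζ(n)` between `ζ'(n)` and `ζ'(n+1)`.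
It remains to see that the increments of `ζ'` vanish: those of `P / P_k` are at most those
of `P`, and `(n+1)(P(n+1) - P(n)) = ζ(n+1) - ζ(n) - P(n) ≤ ζ'(n+1) ≤ (K+1) (ln (n+1))^K`.
-/

open Real Filter Topology Finset

theorem sub_le_mul_sub_mul_of_one_le {b b' q q' : ℝ} (hb : 1 ≤ b) (hbb' : b ≤ b')
    (hqq' : q ≤ q') (hq' : 0 ≤ q') : q' - q ≤ b' * q' - b * q := by
  nlinarith

theorem sub_mem_Icc_of_hasDerivAt_of_monotoneOn {f F : ℝ → ℝ} {a x : ℝ}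
    (hf : ∀ t, a ≤ t → HasDerivAt f (F t) t) (hF : MonotoneOn F (Set.Ici a)) (hx : a ≤ x) :
    f (x + 1) - f x ∈ Set.Icc (F x) (F (x + 1)) := by
  obtain ⟨c, ⟨hxc, hcx⟩, hc⟩ := exists_hasDerivAt_eq_slope f F (lt_add_one x)
    (fun t ht => (hf t (hx.trans ht.1)).continuousAt.continuousWithinAt)
    (fun t ht => hf t (hx.trans ht.1.le))
  rw [add_sub_cancel_left, div_one] at hc
  have hac : a ≤ c := hx.trans hxc.le
  rw [← hc]
  exact ⟨hF hx hac hxc.le, hF hac (hx.trans (by linarith)) hcx.le⟩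

theorem tendsto_sub_sub_of_hasDerivAt_of_monotoneOn {f F : ℝ → ℝ} {a : ℝ}
    (hf : ∀ t, a ≤ t → HasDerivAt f (F t) t) (hF : MonotoneOn F (Set.Ici a))
    (hF_sub : Tendsto (fun n : ℕ => F (n + 1) - F n) atTop (𝓝 0)) :
    Tendsto (fun n : ℕ => f (n + 1) - f n - F n) atTop (𝓝 0) := by
  have ha := tendsto_natCast_atTop_atTop.eventually_ge_atTop a
  refine squeeze_zero' ?_ ?_ hF_sub <;> filter_upwards [ha] with n hn <;>
    obtain ⟨hlo, hhi⟩ := sub_mem_Icc_of_hasDerivAt_of_monotoneOn hf hF hn <;> linarith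

noncomputable def expTower (m : ℕ) : ℝ := exp^[m] 1

theorem expTower_succ (m : ℕ) : expTower (m + 1) = exp (expTower m) :=
  Function.iterate_succ_apply' _ _ _

theorem expTower_mono : Monotone expTower :=
  monotone_nat_of_le_succ fun m => by
    rw [expTower_succ]; linarith [add_one_le_exp (expTower m)]

theorem one_le_expTower (m : ℕ) : 1 ≤ expTower m :=
  expTower_mono (Nat.zero_le m)

theorem expTower_le_log {m : ℕ} {x : ℝ} (hx : expTower (m + 1) ≤ x) :
    expTower m ≤ log x := by
  rw [expTower_succ] at hx
  simpa using log_le_log (exp_pos _) hx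

theorem one_le_iterate_log {m : ℕ} {x : ℝ} (hx : expTower m ≤ x) : 1 ≤ log^[m] x := by
  induction m generalizing x with
  | zero => simpa [expTower] using hx
  | succ m ih => exact ih (expTower_le_log hx)

theorem monotoneOn_iterate_log (m : ℕ) : MonotoneOn log^[m] (Set.Ici (expTower m)) := by
  induction m with
  | zero => exact monotone_id.monotoneOn _
  | succ m ih =>
    intro x hx y hy hxy
    have hx0 : 0 < x := by linarith [one_le_expTower (m + 1), Set.mem_Ici.mp hx]
    exact ih (expTower_le_log hx) (expTower_le_log hy) (log_le_log hx0 hxy)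

theorem iterate_log_succ_le_log {m : ℕ} {x : ℝ} (hx : expTower m ≤ x) :
    log^[m + 1] x ≤ log x := by
  induction m with
  | zero => rfl
  | succ m ih =>
    calc log^[m + 2] x = log (log^[m + 1] x) := Function.iterate_succ_apply' _ _ _
      _ ≤ log^[m + 1] x := log_le_self (zero_le_one.trans (one_le_iterate_log hx))
      _ ≤ log x := ih (expTower_mono m.le_succ |>.trans hx)

noncomputable def iterLogProd (m : ℕ) (x : ℝ) : ℝ := ∏ k ∈ Icc 1 m, log^[k] x

theorem one_le_prod_iterate_log {S : Finset ℕ} {m : ℕ} {x : ℝ} (hS : ∀ j ∈ S, j ≤ m)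
    (hx : expTower m ≤ x) : 1 ≤ ∏ j ∈ S, log^[j] x :=
  one_le_prod fun j hj => one_le_iterate_log (expTower_mono (hS j hj) |>.trans hx)

theorem monotoneOn_prod_iterate_log {S : Finset ℕ} {m : ℕ} (hS : ∀ j ∈ S, j ≤ m) :
    MonotoneOn (fun x => ∏ j ∈ S, log^[j] x) (Set.Ici (expTower m)) :=
  MonotoneOn.finsetProd
    (fun j hj => (monotoneOn_iterate_log j).mono (Set.Ici_subset_Ici.mpr (expTower_mono (hS j hj))))
    (fun j hj _ hx => zero_le_one.trans (one_le_iterate_log ((expTower_mono (hS j hj)).trans hx)))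

theorem one_le_iterLogProd {m : ℕ} {x : ℝ} (hx : expTower m ≤ x) : 1 ≤ iterLogProd m x :=
  one_le_prod_iterate_log (fun _ hj => (mem_Icc.mp hj).2) hx

theorem monotoneOn_iterLogProd (m : ℕ) : MonotoneOn (iterLogProd m) (Set.Ici (expTower m)) :=
  monotoneOn_prod_iterate_log fun _ hj => (mem_Icc.mp hj).2

theorem iterLogProd_le_log_pow {m : ℕ} {x : ℝ} (hx : expTower m ≤ x) :
    iterLogProd m x ≤ log x ^ m := by
  calc iterLogProd m x ≤ ∏ _k ∈ Icc 1 m, log x := by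
        refine prod_le_prod (fun k hk => ?_) (fun k hk => ?_) <;>
          obtain ⟨hk1, hkm⟩ := mem_Icc.mp hk
        · exact zero_le_one.trans (one_le_iterate_log (expTower_mono hkm |>.trans hx))
        · obtain ⟨j, rfl⟩ := Nat.exists_eq_add_of_le' hk1
          exact iterate_log_succ_le_log (expTower_mono (by omega) |>.trans hx)
    _ = log x ^ m := by simp

theorem iterLogProd_mul_prod_Ioc {k m : ℕ} (hkm : k ≤ m) (x : ℝ) :
    iterLogProd k x * ∏ j ∈ Ioc k m, log^[j] x = iterLogProd m x := by
  rw [iterLogProd, iterLogProd, ← Nat.zero_add 1, Icc_add_one_left_eq_Ioc]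
  exact prod_Ioc_consecutive _ (Nat.zero_le k) hkm

theorem iterLogProd_succ (m : ℕ) (x : ℝ) :
    iterLogProd (m + 1) x = iterLogProd m x * log^[m + 1] x :=
  prod_Icc_succ_top (by omega) _

theorem hasDerivAt_iterate_log {m : ℕ} {x : ℝ} (hx : expTower m ≤ x) :
    HasDerivAt log^[m + 1] (x * iterLogProd m x)⁻¹ x := by
  induction m with
  | zero =>
    have hx0 : x ≠ 0 := by linarith [one_le_expTower 0]
    simpa [iterLogProd] using hasDerivAt_log hx0
  | succ m ih =>
    have hm : log^[m + 1] x ≠ 0 := by linarith [one_le_iterate_log hx]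
    have h := (hasDerivAt_log hm).comp x (ih (expTower_mono m.le_succ |>.trans hx))
    rw [← Function.iterate_succ'] at h
    refine h.congr_deriv ?_
    rw [iterLogProd_succ]
    ring

noncomputable def bertrandScale (m : ℕ) (x : ℝ) : ℝ := x * iterLogProd m x

/-- The derivative of `bertrandScale m`, i.e. `∑_{k ≤ m} iterLogProd m x / iterLogProd k x`,
written so that every summand is visibly a product of iterated logarithms. -/
noncomputable def bertrandScaleDeriv (m : ℕ) (x : ℝ) : ℝ :=
  ∑ k ∈ range (m + 1), ∏ j ∈ Ioc k m, log^[j] x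

theorem hasDerivAt_bertrandScale {m : ℕ} {x : ℝ} (hx : expTower m ≤ x) :
    HasDerivAt (bertrandScale m) (bertrandScaleDeriv m x) x := by
  induction m with
  | zero =>
    have h : bertrandScale 0 = id := funext fun y => by simp [bertrandScale, iterLogProd]
    simpa [h, bertrandScaleDeriv] using hasDerivAt_id x
  | succ m ih =>
    have hscale : bertrandScale (m + 1) = fun y => bertrandScale m y * log^[m + 1] y := by
      ext y
      rw [bertrandScale, bertrandScale, iterLogProd_succ, mul_assoc]
    have hxP : x * iterLogProd m x ≠ 0 := by
      have := one_le_iterLogProd (expTower_mono m.le_succ |>.trans hx)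
      have := one_le_expTower (m + 1)
      exact mul_ne_zero (by linarith) (by linarith)
    rw [hscale]
    refine ((ih (expTower_mono m.le_succ |>.trans hx)).mul
      (hasDerivAt_iterate_log (expTower_mono m.le_succ |>.trans hx))).congr_deriv ?_
    rw [bertrandScale, mul_inv_cancel₀ hxP, bertrandScaleDeriv, bertrandScaleDeriv,
      sum_range_succ _ (m + 1), Ioc_self, prod_empty, sum_mul]
    congr 1
    exact sum_congr rfl fun k hk =>
      (prod_Ioc_succ_top (Nat.lt_succ_iff.mp (mem_range.mp hk)) _).symm

theorem monotoneOn_bertrandScaleDeriv (m : ℕ) :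
    MonotoneOn (bertrandScaleDeriv m) (Set.Ici (expTower m)) := fun _ hx _ hy hxy =>
  sum_le_sum fun _ _ => monotoneOn_prod_iterate_log (fun _ hj => (mem_Ioc.mp hj).2) hx hy hxy

theorem bertrandScaleDeriv_le {m : ℕ} {x : ℝ} (hx : expTower m ≤ x) :
    bertrandScaleDeriv m x ≤ (m + 1) * iterLogProd m x := by
  calc bertrandScaleDeriv m x ≤ ∑ _k ∈ range (m + 1), iterLogProd m x := by
        refine sum_le_sum fun k hk => ?_
        have hkm : k ≤ m := Nat.lt_succ_iff.mp (mem_range.mp hk)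
        rw [← iterLogProd_mul_prod_Ioc hkm]
        exact le_mul_of_one_le_left
          (zero_le_one.trans (one_le_prod_iterate_log (fun _ hj => (mem_Ioc.mp hj).2) hx))
          (one_le_iterLogProd (expTower_mono hkm |>.trans hx))
    _ = (m + 1) * iterLogProd m x := by simp

theorem bertrandScaleDeriv_sub_le {m : ℕ} {x y : ℝ} (hx : expTower m ≤ x) (hxy : x ≤ y) :
    bertrandScaleDeriv m y - bertrandScaleDeriv m x ≤
      (m + 1) * (iterLogProd m y - iterLogProd m x) := by
  calc bertrandScaleDeriv m y - bertrandScaleDeriv m x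
      ≤ ∑ _k ∈ range (m + 1), (iterLogProd m y - iterLogProd m x) := by
        rw [bertrandScaleDeriv, bertrandScaleDeriv, ← sum_sub_distrib]
        refine sum_le_sum fun k hk => ?_
        have hkm : k ≤ m := Nat.lt_succ_iff.mp (mem_range.mp hk)
        have hSm : ∀ j ∈ Ioc k m, j ≤ m := fun _ hj => (mem_Ioc.mp hj).2
        have hxk : expTower k ≤ x := expTower_mono hkm |>.trans hx
        rw [← iterLogProd_mul_prod_Ioc hkm, ← iterLogProd_mul_prod_Ioc hkm]
        exact sub_le_mul_sub_mul_of_one_le (one_le_iterLogProd hxk)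
          (monotoneOn_iterLogProd k hxk (hxk.trans hxy) hxy)
          (monotoneOn_prod_iterate_log hSm hx (hx.trans hxy) hxy)
          (zero_le_one.trans (one_le_prod_iterate_log hSm (hx.trans hxy)))
    _ = (m + 1) * (iterLogProd m y - iterLogProd m x) := by simp [mul_sub]

theorem iterLogProd_succ_sub_le {m : ℕ} {x : ℝ} (hx : expTower m ≤ x) :
    iterLogProd m (x + 1) - iterLogProd m x ≤ (m + 1) * (log (x + 1) ^ m / (x + 1)) := by
  have hx1 : expTower m ≤ x + 1 := hx.trans (by linarith)
  have hscale := (sub_mem_Icc_of_hasDerivAt_of_monotoneOn (fun _ ht => hasDerivAt_bertrandScale ht)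
    (monotoneOn_bertrandScaleDeriv m) hx).2
  have hP := one_le_iterLogProd hx
  rw [mul_div_assoc', le_div_iff₀ (by linarith [one_le_expTower m])]
  calc (iterLogProd m (x + 1) - iterLogProd m x) * (x + 1)
      = bertrandScale m (x + 1) - bertrandScale m x - iterLogProd m x := by
        simp only [bertrandScale]; ring
    _ ≤ bertrandScaleDeriv m (x + 1) := by linarith
    _ ≤ (m + 1) * iterLogProd m (x + 1) := bertrandScaleDeriv_le hx1
    _ ≤ (m + 1) * log (x + 1) ^ m := by gcongr; exact iterLogProd_le_log_pow hx1

theorem tendsto_iterLogProd_succ_sub (m : ℕ) :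
    Tendsto (fun n : ℕ => iterLogProd m (n + 1) - iterLogProd m n) atTop (𝓝 0) := by
  have hlog : Tendsto (fun n : ℕ => (m + 1) * (log ((n : ℝ) + 1) ^ m / ((n : ℝ) + 1)))
      atTop (𝓝 0) := by
    simpa using ((tendsto_pow_log_div_mul_add_atTop 1 0 m one_ne_zero).comp
      (tendsto_natCast_atTop_atTop.atTop_add tendsto_const_nhds)).const_mul ((m : ℝ) + 1)
  refine squeeze_zero' ?_ ?_ hlog <;>
    filter_upwards [tendsto_natCast_atTop_atTop.eventually_ge_atTop (expTower m)] with n hn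
  · exact sub_nonneg.mpr (monotoneOn_iterLogProd m hn (hn.trans (by linarith)) (by linarith))
  · exact iterLogProd_succ_sub_le hn

theorem tendsto_bertrandScaleDeriv_succ_sub (m : ℕ) :
    Tendsto (fun n : ℕ => bertrandScaleDeriv m (n + 1) - bertrandScaleDeriv m n)
      atTop (𝓝 0) := by
  have hlim := (tendsto_iterLogProd_succ_sub m).const_mul ((m : ℝ) + 1)
  rw [mul_zero] at hlim
  refine squeeze_zero' ?_ ?_ hlim <;>
    filter_upwards [tendsto_natCast_atTop_atTop.eventually_ge_atTop (expTower m)] with n hn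
  · exact sub_nonneg.mpr
      (monotoneOn_bertrandScaleDeriv m hn (hn.trans (by linarith)) (by linarith))
  · exact bertrandScaleDeriv_sub_le hn (by linarith)

theorem tendsto_bertrandScale_succ_sub_sub_deriv (m : ℕ) :
    Tendsto (fun n : ℕ => bertrandScale m (n + 1) - bertrandScale m n - bertrandScaleDeriv m n)
      atTop (𝓝 0) :=
  tendsto_sub_sub_of_hasDerivAt_of_monotoneOn (fun _ ht => hasDerivAt_bertrandScale ht)
    (monotoneOn_bertrandScaleDeriv m) (tendsto_bertrandScaleDeriv_succ_sub m)

theorem bertrandScaleDeriv_eq {m : ℕ} {x : ℝ} (hx : expTower m ≤ x) :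
    bertrandScaleDeriv m x = iterLogProd m x * (1 + ∑ i ∈ Icc 1 m, 1 / iterLogProd i x) := by
  have hQ : ∀ k ≤ m,
      ∏ j ∈ Ioc k m, log^[j] x = iterLogProd m x * (1 / iterLogProd k x) := by
    intro k hkm
    have := one_le_iterLogProd (expTower_mono hkm |>.trans hx)
    rw [← iterLogProd_mul_prod_Ioc hkm]
    field_simp
  rw [bertrandScaleDeriv, Nat.range_succ_eq_Icc_zero, Icc_eq_cons_Ioc (Nat.zero_le m), sum_cons,
    ← Icc_add_one_left_eq_Ioc, zero_add, mul_add, mul_one, mul_sum]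
  exact congrArg _ (sum_congr rfl fun k hk => hQ k (mem_Icc.mp hk).2)

theorem kummer_quantity_asymptotics_general
    (a : ℕ → ℝ) (K : ℕ) (hK : 1 ≤ K) (s : ℕ → ℝ)
    (hratio : ∀ᶠ n : ℕ in Filter.atTop,
      a n / a (n + 1) =
        1 + 1 / (n : ℝ)
          + (1 / (n : ℝ)) * ∑ i ∈ Finset.Icc 1 (K - 1),
              1 / ∏ k ∈ Finset.Icc 1 i, Real.log^[k] (n : ℝ)
          + s n / ((n : ℝ) * ∏ k ∈ Finset.Icc 1 K, Real.log^[k] (n : ℝ)))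
    (ζ : ℕ → ℝ)
    (hζ : ∀ n, ζ n = (n : ℝ) * ∏ k ∈ Finset.Icc 1 K, Real.log^[k] (n : ℝ)) :
    Filter.Tendsto
      (fun n : ℕ => (ζ n * (a n / a (n + 1)) - ζ (n + 1)) - s n + 1)
      Filter.atTop (nhds 0) := by
  obtain ⟨m, rfl⟩ : ∃ m, K = m + 1 := ⟨K - 1, by omega⟩
  have hlim := (tendsto_bertrandScale_succ_sub_sub_deriv (m + 1)).neg
  rw [neg_zero] at hlim
  refine hlim.congr' ?_
  filter_upwards [hratio, tendsto_natCast_atTop_atTop.eventually_ge_atTop (expTower (m + 1))]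
    with n hratio_n hn
  have hratio_n : a n / a (n + 1) = 1 + 1 / (n : ℝ) + 1 / (n : ℝ) *
      ∑ i ∈ Icc 1 m, 1 / iterLogProd i n + s n / (n * iterLogProd (m + 1) n) := hratio_n
  have hζ_eq (k : ℕ) : ζ k = bertrandScale (m + 1) k := hζ k
  have hP : iterLogProd (m + 1) n ≠ 0 := by linarith [one_le_iterLogProd hn]
  have hn0 : (n : ℝ) ≠ 0 := by linarith [one_le_expTower (m + 1)]
  rw [hζ_eq, hζ_eq, hratio_n, bertrandScaleDeriv_eq hn,
    sum_Icc_succ_top (by omega : 1 ≤ m + 1), Nat.cast_succ]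
  simp only [bertrandScale]
  field_simp
  ring

/-- Under the hypotheses of the extended Bertrand–De Morgan test with bounded `s`,
the Kummer quantity `ρ_n = ζ_n · (a_n / a_{n+1}) - ζ_{n+1}` with
`ζ_n = n · ∏_{k=1}^K ln_{(k)} n` satisfies `ρ_n = s_n - 1 + o(1)`.
Here `Real.log^[k]` is the `k`-th iterate of `Real.log`. -/
theorem kummer_quantity_asymptotics
    (a : ℕ → ℝ) (ha : ∀ n, 0 < a n) (K : ℕ) (hK : 1 ≤ K) (s : ℕ → ℝ)
    (hratio : ∀ᶠ n : ℕ in Filter.atTop,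
      a n / a (n + 1) =
        1 + 1 / (n : ℝ)
          + (1 / (n : ℝ)) * ∑ i ∈ Finset.Icc 1 (K - 1),
              1 / ∏ k ∈ Finset.Icc 1 i, Real.log^[k] (n : ℝ)
          + s n / ((n : ℝ) * ∏ k ∈ Finset.Icc 1 K, Real.log^[k] (n : ℝ)))
    (hbdd : ∃ M : ℝ, ∀ n, |s n| ≤ M)
    (ζ : ℕ → ℝ)
    (hζ : ∀ n, ζ n = (n : ℝ) * ∏ k ∈ Finset.Icc 1 K, Real.log^[k] (n : ℝ)) :
    Filter.Tendsto
      (fun n : ℕ => (ζ n * (a n / a (n + 1)) - ζ (n + 1)) - s n + 1)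
      Filter.atTop (nhds 0) :=
  kummer_quantity_asymptotics_general a K hK s hratio ζ hζ
end

section
/- (Series form of the transience criterion for the perturbed reflected random walk.) Let (α_n) be a sequence of real numbers with 0 < α_n < min{C, n/2} for all n ≥ 1, for some constant C > 0, and set λ_n = 1/2 + α_n/n and μ_n = 1/2 − α_n/n. Suppose there exist a constant c > 1, an integer K ≥ 1 and an index n_0 such that for all n > n_0, α_n ≥ (1/4)·(1 + ∑_{k=1}^{K-1} 1/(∏_{j=1}^{k} ln_{(j)} n) + c/(∏_{j=1}^{K} ln_{(j)} n)). Then the series ∑_{n=1}^∞ ∏_{k=1}^{n} (μ_k/λ_k) converges (equivalently, the associated reflected random walk with upward step probability 1/2 + α_{S_t}/S_t at state S_t > 0 is transient). -/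
/-!
Since `(1/2 - a) / (1/2 + a) ≤ exp (-4a)`, the partial products `P n = ∏_{k ≤ n} μ_k / λ_k` satisfy
`P (n+1) ≤ P n · exp (-4 α_{n+1} / (n+1))`. The hypothesis says that `4 α_n / n` dominates the
derivative at `n` of the potential `G = ln_{(1)} + ⋯ + ln_{(K)} + c · ln_{(K+1)}`, and `G'` is
decreasing, so `P n · exp (G (n+1))` is eventually nonincreasing and `P n = O(exp (-G (n+1)))`.
Finally `exp (-G x) = 1 / (x ln x ⋯ ln_{(K-1)} x · (ln_{(K)} x)^c)`, which is `-1/(c-1)` times the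
derivative of `(ln_{(K)} x)^(1-c) = exp (-(c-1) ln_{(K+1)} x)`, so its series telescopes.
-/

open Filter Finset Real

theorem summable_of_le_sub_succ {b h : ℕ → ℝ} (hb : ∀ n, 0 ≤ b n) (hh : ∀ n, 0 ≤ h n)
    (hbh : ∀ᶠ n in atTop, b n ≤ h n - h (n + 1)) : Summable b := by
  obtain ⟨N, hN⟩ := eventually_atTop.mp hbh
  refine (summable_nat_add_iff N).mp
    (summable_of_sum_range_le (c := h N) (fun n => hb _) fun m => ?_)
  calc ∑ i ∈ range m, b (i + N) ≤ ∑ i ∈ range m, (h (N + i) - h (N + (i + 1))) :=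
        sum_le_sum fun i _ => by rw [add_comm i N]; exact hN _ (Nat.le_add_right N i)
    _ = h N - h (N + m) := sum_range_sub' (fun i => h (N + i)) m
    _ ≤ h N := sub_le_self _ (hh _)

theorem summable_of_succ_mul_le {a b : ℕ → ℝ} (ha : ∀ n, 0 ≤ a n) (hb : ∀ n, 0 < b n)
    (hab : ∀ᶠ n in atTop, a (n + 1) * b n ≤ a n * b (n + 1)) (hbs : Summable b) :
    Summable a := by
  obtain ⟨N, hN⟩ := eventually_atTop.mp hab
  have hdecr : ∀ n ≥ N, a n / b n ≤ a N / b N := by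
    intro n hn
    induction n, hn using Nat.le_induction with
    | base => rfl
    | succ n hn ih =>
      refine le_trans ?_ ih
      rw [div_le_div_iff₀ (hb _) (hb _)]
      linarith [hN n hn]
  refine (hbs.mul_left (a N / b N)).of_norm_bounded_eventually_nat ?_
  filter_upwards [eventually_ge_atTop N] with n hn
  rw [Real.norm_of_nonneg (ha n), ← div_le_iff₀ (hb n)]
  exact hdecr n hn

theorem sub_le_mul_of_hasDerivAt_le {f f' : ℝ → ℝ} {a b C : ℝ} (hab : a ≤ b)
    (hf : ∀ x ∈ Set.Icc a b, HasDerivAt f (f' x) x) (hC : ∀ x ∈ Set.Icc a b, f' x ≤ C) :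
    f b - f a ≤ C * (b - a) := by
  refine (convex_Icc a b).image_sub_le_mul_sub_of_deriv_le
    (fun x hx => (hf x hx).continuousAt.continuousWithinAt)
    (fun x hx => (hf x (interior_subset hx)).differentiableAt.differentiableWithinAt)
    (fun x hx => ?_) a (Set.left_mem_Icc.2 hab) b (Set.right_mem_Icc.2 hab) hab
  rw [(hf x (interior_subset hx)).deriv]
  exact hC x (interior_subset hx)

theorem half_sub_div_half_add_le_exp {a : ℝ} (h0 : 0 ≤ a) (h1 : a < 1 / 2) :
    (1 / 2 - a) / (1 / 2 + a) ≤ exp (-(4 * a)) := by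
  have hx : |2 * a| < 1 := by rw [abs_of_nonneg (by positivity)]; linarith
  have hlog : 2 * (2 * a) ≤ log (1 + 2 * a) - log (1 - 2 * a) := by
    simpa using le_hasSum (hasSum_log_sub_log_of_abs_lt_one hx) 0 fun k _ => by positivity
  calc (1 / 2 - a) / (1 / 2 + a) = exp (-(log (1 + 2 * a) - log (1 - 2 * a))) := by
        rw [exp_neg, exp_sub, exp_log (by linarith), exp_log (by linarith)]
        field_simp
    _ ≤ exp (-(4 * a)) := exp_le_exp.2 (by linarith)

theorem prod_Icc_one_eq_prod_range {M : Type*} [CommMonoid M] (f : ℕ → M) (n : ℕ) :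
    ∏ k ∈ Icc 1 n, f k = ∏ k ∈ range n, f (k + 1) := by
  rw [← Ico_add_one_right_eq_Icc, prod_Ico_eq_prod_range]
  simp [add_comm]

theorem sum_Icc_one_eq_sum_range {M : Type*} [AddCommMonoid M] (f : ℕ → M) (n : ℕ) :
    ∑ k ∈ Icc 1 n, f k = ∑ k ∈ range n, f (k + 1) := by
  rw [← Ico_add_one_right_eq_Icc, sum_Ico_eq_sum_range]
  simp [add_comm]

theorem tendsto_iterate_log_atTop (k : ℕ) : Tendsto log^[k] atTop atTop := by
  induction k with
  | zero => exact tendsto_id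
  | succ k ih => rw [Function.iterate_succ']; exact tendsto_log_atTop.comp ih

theorem eventually_iterate_log_pos (k : ℕ) : ∀ᶠ x in atTop, ∀ j < k, 0 < log^[j] x :=
  (eventually_all_finite (Set.finite_lt_nat k)).2 fun j _ =>
    (tendsto_iterate_log_atTop j).eventually_gt_atTop 0

section IteratedLog

variable {k : ℕ} {a b x : ℝ}

theorem iterate_log_le_iterate_log (hab : a ≤ b) (ha : ∀ j < k, 0 < log^[j] a) :
    log^[k] a ≤ log^[k] b := by
  induction k with
  | zero => exact hab
  | succ k ih =>
    rw [Function.iterate_succ_apply', Function.iterate_succ_apply']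
    exact log_le_log (ha k k.lt_succ_self) (ih fun j hj => ha j (hj.trans k.lt_succ_self))

theorem iterate_log_pos_of_le (hab : a ≤ b) (ha : ∀ j < k, 0 < log^[j] a) :
    ∀ j < k, 0 < log^[j] b := fun j hj =>
  (ha j hj).trans_le (iterate_log_le_iterate_log hab fun i hi => ha i (hi.trans hj))

theorem prod_range_iterate_log_le (hab : a ≤ b) (ha : ∀ j < k, 0 < log^[j] a) :
    ∏ j ∈ range k, log^[j] a ≤ ∏ j ∈ range k, log^[j] b :=
  prod_le_prod (fun j hj => (ha j (mem_range.1 hj)).le) fun _ hj =>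
    iterate_log_le_iterate_log hab fun i hi => ha i (hi.trans (mem_range.1 hj))

theorem hasDerivAt_iterate_log_s17 (hx : ∀ j < k, 0 < log^[j] x) :
    HasDerivAt log^[k] (∏ j ∈ range k, log^[j] x)⁻¹ x := by
  induction k with
  | zero => simpa using hasDerivAt_id x
  | succ k ih =>
    rw [Function.iterate_succ', prod_range_succ, mul_inv, mul_comm]
    exact (hasDerivAt_log (hx k k.lt_succ_self).ne').comp x
      (ih fun j hj => hx j (hj.trans k.lt_succ_self))

theorem exp_sum_range_iterate_log (hx : ∀ j < k, 0 < log^[j] x) :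
    exp (∑ j ∈ range k, log^[j + 1] x) = ∏ j ∈ range k, log^[j] x := by
  rw [exp_sum]
  exact prod_congr rfl fun j hj => by
    rw [Function.iterate_succ_apply', exp_log (hx j (mem_range.1 hj))]

theorem prod_range_succ_iterate_log (k : ℕ) (x : ℝ) :
    ∏ j ∈ range (k + 1), log^[j] x = x * ∏ j ∈ Icc 1 k, log^[j] x := by
  rw [prod_range_succ', prod_Icc_one_eq_prod_range, mul_comm, Function.iterate_zero_apply]

end IteratedLog

section LogPotential

variable {K : ℕ} {c a b x : ℝ}

noncomputable def logPotential (K : ℕ) (c x : ℝ) : ℝ :=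
  ∑ k ∈ range K, log^[k + 1] x + c * log^[K + 1] x

noncomputable def logPotentialDeriv (K : ℕ) (c x : ℝ) : ℝ :=
  ∑ k ∈ range K, (∏ j ∈ range (k + 1), log^[j] x)⁻¹ + c * (∏ j ∈ range (K + 1), log^[j] x)⁻¹

theorem hasDerivAt_logPotential (hx : ∀ j < K + 1, 0 < log^[j] x) :
    HasDerivAt (logPotential K c) (logPotentialDeriv K c x) x :=
  (HasDerivAt.fun_sum fun k hk => hasDerivAt_iterate_log_s17 fun j hj =>
      hx j (hj.trans_le (by simpa using (mem_range.1 hk).le))).add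
    ((hasDerivAt_iterate_log_s17 hx).const_mul c)

theorem logPotentialDeriv_le (hc : 0 ≤ c) (hab : a ≤ b) (ha : ∀ j < K + 1, 0 < log^[j] a) :
    logPotentialDeriv K c b ≤ logPotentialDeriv K c a := by
  have hinv : ∀ k < K + 1, (∏ j ∈ range (k + 1), log^[j] b)⁻¹ ≤ (∏ j ∈ range (k + 1), log^[j] a)⁻¹ :=
    fun k hk => inv_anti₀ (prod_pos fun j hj => ha j (by simp at hj; omega))
      (prod_range_iterate_log_le hab fun j hj => ha j (by omega))
  exact add_le_add (sum_le_sum fun k hk => hinv k (by simp at hk; omega))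
    (mul_le_mul_of_nonneg_left (hinv K K.lt_succ_self) hc)

theorem logPotential_le_logPotential (hc : 0 ≤ c) (hab : a ≤ b) (ha : ∀ j < K + 1, 0 < log^[j] a) :
    logPotential K c a ≤ logPotential K c b := by
  unfold logPotential
  gcongr with k hk
  · exact iterate_log_le_iterate_log hab fun j hj => ha j (by simp at hk; omega)
  · exact iterate_log_le_iterate_log hab ha

theorem logPotential_add_one_sub_le (hc : 0 ≤ c) (ha : ∀ j < K + 1, 0 < log^[j] a) :
    logPotential K c (a + 1) - logPotential K c a ≤ logPotentialDeriv K c a := by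
  simpa using sub_le_mul_of_hasDerivAt_le (le_add_of_nonneg_right zero_le_one)
    (fun x hx => hasDerivAt_logPotential (iterate_log_pos_of_le hx.1 ha))
    (fun x hx => logPotentialDeriv_le hc hx.1 ha)

theorem logPotentialDeriv_eq (hK : 1 ≤ K) (x : ℝ) :
    logPotentialDeriv K c x = x⁻¹ * (1 + ∑ k ∈ Icc 1 (K - 1), 1 / ∏ j ∈ Icc 1 k, log^[j] x
      + c / ∏ j ∈ Icc 1 K, log^[j] x) := by
  obtain ⟨K, rfl⟩ := Nat.exists_eq_add_of_le' hK
  simp only [logPotentialDeriv, prod_range_succ_iterate_log, mul_inv, sum_range_succ',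
    sum_Icc_one_eq_sum_range, Nat.add_sub_cancel]
  simp [mul_add, mul_sum, div_eq_mul_inv, mul_left_comm, add_comm]

theorem logPotential_add_one_sub_le_of_le (hK : 1 ≤ K) (hc : 0 ≤ c)
    (hx : ∀ j < K + 1, 0 < log^[j] x) {A : ℝ}
    (hA : 1 / 4 * (1 + ∑ k ∈ Icc 1 (K - 1), 1 / ∏ j ∈ Icc 1 k, log^[j] x
      + c / ∏ j ∈ Icc 1 K, log^[j] x) ≤ A) :
    logPotential K c (x + 1) - logPotential K c x ≤ 4 * (A / x) := by
  refine (logPotential_add_one_sub_le hc hx).trans ?_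
  rw [logPotentialDeriv_eq hK, mul_comm, mul_div_assoc', div_eq_mul_inv (4 * A)]
  exact mul_le_mul_of_nonneg_right (by linarith) (inv_nonneg.2 (hx 0 K.succ_pos).le)

theorem hasDerivAt_exp_neg_mul_iterate_log (hx : ∀ j < K + 1, 0 < log^[j] x) :
    HasDerivAt (fun y => exp (-(c - 1) * log^[K + 1] y))
      (-(c - 1) * exp (-logPotential K c x)) x := by
  convert ((hasDerivAt_iterate_log_s17 hx).const_mul (-(c - 1))).exp using 1
  have hG : logPotential K c x = (c - 1) * log^[K + 1] x + ∑ k ∈ range (K + 1), log^[k + 1] x := by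
    rw [logPotential, sum_range_succ]; ring
  rw [hG, neg_add, exp_add, exp_neg (∑ _ ∈ _, _), exp_sum_range_iterate_log hx]
  simp only [neg_mul]
  ring

theorem summable_exp_neg_logPotential (hc : 1 < c) :
    Summable fun n : ℕ => exp (-logPotential K c n) := by
  set H : ℝ → ℝ := fun y => exp (-(c - 1) * log^[K + 1] y)
  have hstep : ∀ᶠ n : ℕ in atTop,
      (c - 1) * exp (-logPotential K c (n + 1 : ℕ)) ≤ H n - H (n + 1 : ℕ) := by
    filter_upwards [tendsto_natCast_atTop_atTop.eventually (eventually_iterate_log_pos (K + 1))]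
      with n hn
    have hmvt := sub_le_mul_of_hasDerivAt_le (by linarith : (n : ℝ) ≤ n + 1)
      (fun x hx => hasDerivAt_exp_neg_mul_iterate_log (c := c) (iterate_log_pos_of_le hx.1 hn))
      (C := -(c - 1) * exp (-logPotential K c (n + 1))) fun x hx => by
        have := logPotential_le_logPotential (by linarith) hx.2 (iterate_log_pos_of_le hx.1 hn)
        have := exp_le_exp.2 (neg_le_neg this)
        nlinarith
    push_cast
    linarith
  have := summable_of_le_sub_succ (fun n => by positivity) (fun n => (exp_pos _).le) hstep
  exact (summable_nat_add_iff 1).mp ((summable_mul_left_iff (by linarith : c - 1 ≠ 0)).mp this)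

end LogPotential

theorem random_walk_transient_general
    (α : ℕ → ℝ) (C : ℝ)
    (hα : ∀ n : ℕ, 1 ≤ n → 0 < α n ∧ α n < min C ((n : ℝ) / 2))
    (lam mu : ℕ → ℝ)
    (hlam : ∀ n : ℕ, lam n = 1 / 2 + α n / (n : ℝ))
    (hmu : ∀ n : ℕ, mu n = 1 / 2 - α n / (n : ℝ))
    (c : ℝ) (hc : 1 < c) (K : ℕ) (hK : 1 ≤ K) (n₀ : ℕ)
    (h : ∀ n > n₀,
      α n ≥ (1 / 4) *
        (1 + ∑ k ∈ Finset.Icc 1 (K - 1),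
              1 / ∏ j ∈ Finset.Icc 1 k, Real.log^[j] (n : ℝ)
           + c / ∏ j ∈ Finset.Icc 1 K, Real.log^[j] (n : ℝ))) :
    Summable (fun n : ℕ => ∏ k ∈ Finset.Icc 1 n, mu k / lam k) := by
  have hratio : ∀ m ≥ 1, 0 ≤ mu m / lam m ∧ mu m / lam m ≤ exp (-(4 * (α m / m))) := by
    intro m hm
    have hm0 : (0 : ℝ) < m := by exact_mod_cast hm
    have ha0 : 0 ≤ α m / m := (div_pos (hα m hm).1 hm0).le
    have ha1 : α m / m < 1 / 2 := by
      rw [div_lt_iff₀ hm0]; linarith [(hα m hm).2.trans_le (min_le_right _ _)]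
    rw [hmu, hlam]
    exact ⟨div_nonneg (by linarith) (by linarith), half_sub_div_half_add_le_exp ha0 ha1⟩
  have hP : ∀ n, 0 ≤ ∏ k ∈ Icc 1 n, mu k / lam k :=
    fun n => prod_nonneg fun k hk => (hratio k (mem_Icc.1 hk).1).1
  refine summable_of_succ_mul_le (b := fun n : ℕ => exp (-logPotential K c (n + 1 : ℕ))) hP
    (fun n => exp_pos _) ?_ ((summable_nat_add_iff 1).mpr (summable_exp_neg_logPotential hc))
  filter_upwards [eventually_ge_atTop n₀,
    (tendsto_natCast_atTop_atTop.comp (tendsto_add_atTop_nat 1)).eventually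
      (eventually_iterate_log_pos (K + 1))] with n hn hpos
  rw [Function.comp_apply] at hpos
  have hstep := logPotential_add_one_sub_le_of_le hK (by linarith) hpos (h (n + 1) (by omega))
  rw [prod_Icc_succ_top (by omega), mul_assoc]
  refine mul_le_mul_of_nonneg_left ?_ (hP n)
  calc mu (n + 1) / lam (n + 1) * exp (-logPotential K c (n + 1 : ℕ))
      ≤ exp (-(4 * (α (n + 1) / (n + 1 : ℕ)))) * exp (-logPotential K c (n + 1 : ℕ)) := by
        gcongr
        exact (hratio (n + 1) n.succ_pos).2
    _ ≤ exp (-logPotential K c (n + 1 + 1 : ℕ)) := by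
        rw [← exp_add]
        gcongr
        push_cast at hstep ⊢
        linarith

/-- **Series form of the transience criterion for the perturbed reflected random
walk**, with `λ_n = 1/2 + α_n/n` and `μ_n = 1/2 - α_n/n`.
Here `Real.log^[k]` is the `k`-th iterate of `Real.log`. -/
theorem random_walk_transient
    (α : ℕ → ℝ) (C : ℝ) (hC : 0 < C)
    (hα : ∀ n : ℕ, 1 ≤ n → 0 < α n ∧ α n < min C ((n : ℝ) / 2))
    (lam mu : ℕ → ℝ)
    (hlam : ∀ n : ℕ, lam n = 1 / 2 + α n / (n : ℝ))
    (hmu : ∀ n : ℕ, mu n = 1 / 2 - α n / (n : ℝ))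
    (c : ℝ) (hc : 1 < c) (K : ℕ) (hK : 1 ≤ K) (n₀ : ℕ)
    (h : ∀ n > n₀,
      α n ≥ (1 / 4) *
        (1 + ∑ k ∈ Finset.Icc 1 (K - 1),
              1 / ∏ j ∈ Finset.Icc 1 k, Real.log^[j] (n : ℝ)
           + c / ∏ j ∈ Finset.Icc 1 K, Real.log^[j] (n : ℝ))) :
    Summable (fun n : ℕ => ∏ k ∈ Finset.Icc 1 n, mu k / lam k) :=
  random_walk_transient_general α C hα lam mu hlam hmu c hc K hK n₀ h
end
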